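/- arXiv:1306.2862 — 9 statements merged into one kernel-verified Lean document; each statement's English description precedes it below -/
import Mathlib

section
/- Let S be a numerical semigroup with conductor c and genus g. If m ≥ 2c − 1, then the number of divisors of m in S is m + 1 − 2g, i.e., #(S ∩ (m − S)) = m + 1 − 2g. -/
/-- A numerical semigroup: a cofinite submonoid of ℕ, viewed inside ℤ. -/
def IsNumSgp (S : Set ℤ) : Prop :=
  0 ∈ S ∧ (∀ x ∈ S, 0 ≤ x) ∧ (∀ x ∈ S, ∀ y ∈ S, x + y ∈ S) ∧
    {x : ℤ | 0 ≤ x ∧ x ∉ S}.Finite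

/-- `c` is the conductor of `S`: least integer with `c + ℕ ⊆ S`. -/
def IsConductor (S : Set ℤ) (c : ℤ) : Prop :=
  (∀ n, c ≤ n → n ∈ S) ∧ ∀ c', (∀ n, c' ≤ n → n ∈ S) → c ≤ c'

/-- Set of divisors of `x` in `S`: `D(x) = {s ∈ S | x - s ∈ S}`. -/
def divs (S : Set ℤ) (x : ℤ) : Set ℤ := {s | s ∈ S ∧ x - s ∈ S}

/-- Genus: number of gaps. -/
noncomputable def genus (S : Set ℤ) : ℕ := {x : ℤ | 0 ≤ x ∧ x ∉ S}.ncard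

/-- Apéry set of `S` with respect to the integer `n`. -/
def Ap (S : Set ℤ) (n : ℤ) : Set ℤ := {s | s ∈ S ∧ s - n ∉ S}

/-- The numerical semigroup generated by `a` and `b`. -/
def gen2 (a b : ℤ) : Set ℤ := {n | ∃ x y : ℕ, n = (x : ℤ) * a + (y : ℤ) * b}

/-! The interval `[0, m]` splits into the divisors of `m`, the gaps, and the reflections `m - x` of
the gaps. The last two pieces are disjoint once `m ≥ 2c - 1`: a gap `x` and a gap `m - x` would
both be at most `c - 1`, forcing `m ≤ 2c - 2`. Hence `m + 1 = #D(m) + 2g`. -/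

def gaps (S : Set ℤ) : Set ℤ := {x | 0 ≤ x ∧ x ∉ S}

theorem genus_eq_ncard_gaps (S : Set ℤ) : genus S = (gaps S).ncard := rfl

section

variable {S : Set ℤ} {c m : ℤ}

theorem lt_of_mem_gaps (hc : ∀ n, c ≤ n → n ∈ S) {x : ℤ} (hx : x ∈ gaps S) : x < c := by
  by_contra! h
  exact hx.2 (hc x h)

theorem nonneg_of_forall_le_mem (hpos : ∀ x ∈ S, 0 ≤ x) (hc : ∀ n, c ≤ n → n ∈ S) : 0 ≤ c := by
  by_contra! h
  have := hpos (-1) (hc (-1) (by omega))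
  omega

theorem divs_subset_Icc (hpos : ∀ x ∈ S, 0 ≤ x) : divs S m ⊆ Set.Icc 0 m := by
  rintro s ⟨hs, hms⟩
  have := hpos _ hms
  exact ⟨hpos s hs, by omega⟩

theorem Icc_diff_divs (hc : ∀ n, c ≤ n → n ∈ S) (hm : 2 * c - 1 ≤ m) :
    Set.Icc 0 m \ divs S m = gaps S ∪ (m - ·) '' gaps S := by
  ext s
  constructor
  · rintro ⟨⟨hs0, hsm⟩, hdiv⟩
    by_cases hs : s ∈ S
    · exact Or.inr ⟨m - s, ⟨by omega, fun hms => hdiv ⟨hs, hms⟩⟩, by ring⟩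
    · exact Or.inl ⟨hs0, hs⟩
  · rintro (⟨hs0, hsS⟩ | ⟨x, ⟨hx0, hxS⟩, rfl⟩)
    · have := lt_of_mem_gaps hc ⟨hs0, hsS⟩
      exact ⟨⟨hs0, by omega⟩, fun hdiv => hsS hdiv.1⟩
    · have := lt_of_mem_gaps hc ⟨hx0, hxS⟩
      dsimp only
      refine ⟨⟨by omega, by omega⟩, fun hdiv => hxS ?_⟩
      simpa using hdiv.2

theorem disjoint_gaps_image_sub_gaps (hc : ∀ n, c ≤ n → n ∈ S) (hm : 2 * c - 1 ≤ m) :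
    Disjoint (gaps S) ((m - ·) '' gaps S) := by
  rw [Set.disjoint_right]
  rintro _ ⟨x, hx, rfl⟩ hmx
  have := lt_of_mem_gaps hc hx
  dsimp only at hmx
  have := lt_of_mem_gaps hc hmx
  omega

theorem ncard_divs_add_two_mul_ncard_gaps (hpos : ∀ x ∈ S, 0 ≤ x) (hfin : (gaps S).Finite)
    (hc : ∀ n, c ≤ n → n ∈ S) (hm : 2 * c - 1 ≤ m) :
    ((divs S m).ncard : ℤ) + 2 * (gaps S).ncard = m + 1 := by
  have hsplit := Set.ncard_sdiff_add_ncard_of_subset (divs_subset_Icc (m := m) hpos)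
    (Set.finite_Icc 0 m)
  rw [Icc_diff_divs hc hm,
    Set.ncard_union_eq (disjoint_gaps_image_sub_gaps hc hm) hfin (hfin.image _),
    Set.ncard_image_of_injective _ sub_right_injective,
    ← Finset.coe_Icc, Set.ncard_coe_finset] at hsplit
  have := nonneg_of_forall_le_mem hpos hc
  have := Int.card_Icc_of_le (a := 0) (b := m) (by omega)
  omega

end

theorem stmt_1 (S : Set ℤ) (hS : IsNumSgp S) (c : ℤ) (hc : IsConductor S c)
    (m : ℤ) (hm : 2 * c - 1 ≤ m) :
    ((divs S m).ncard : ℤ) = m + 1 - 2 * (genus S : ℤ) := by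
  obtain ⟨-, hpos, -, hfin⟩ := hS
  rw [genus_eq_ncard_gaps, ← ncard_divs_add_two_mul_ncard_gaps hpos hfin hc.1 hm]
  ring
end

section
/- Let a < b be coprime positive integers, S = ⟨a,b⟩, and n a positive integer written as n = ua + vb with 0 ≤ u < b. If −a ≤ v < 0, then Ap(S,n) = {αa + βb : 0 ≤ α < u and 0 ≤ β < a + v}. -/
/-!
Since `a` and `b` are coprime, every integer has a unique expression `x * a + y * b` with
`0 ≤ x < b`, and it lies in `⟨a, b⟩` exactly when `y ≥ 0`. For `s = x * a + y * b` in this normal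
form, `s - n` has normal form `(x - u) * a + (y - v) * b` if `u ≤ x`, and
`(x - u + b) * a + (y - v - a) * b` if `x < u`; as `v < 0`, the first case never gives an element
of the Apéry set, and the second gives one exactly when `y < a + v`.
-/

section TwoGenerated

variable {a b : ℤ}

lemma mem_gen2_of_nonneg {x y : ℤ} (hx : 0 ≤ x) (hy : 0 ≤ y) : x * a + y * b ∈ gen2 a b :=
  ⟨x.toNat, y.toNat, by rw [Int.toNat_of_nonneg hx, Int.toNat_of_nonneg hy]⟩

lemma exists_normal_form_of_mem_gen2 (ha : 0 ≤ a) (hb : 0 < b) {s : ℤ} (hs : s ∈ gen2 a b) :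
    ∃ x y : ℤ, 0 ≤ x ∧ x < b ∧ 0 ≤ y ∧ s = x * a + y * b := by
  obtain ⟨p, q, rfl⟩ := hs
  refine ⟨p % b, q + p / b * a, Int.emod_nonneg _ hb.ne', Int.emod_lt_of_pos _ hb,
    add_nonneg (Int.natCast_nonneg q) (mul_nonneg (Int.ediv_nonneg (Int.natCast_nonneg p) hb.le) ha),
    ?_⟩
  have hp : (p : ℤ) = b * (p / b) + p % b := (Int.mul_ediv_add_emod _ _).symm
  linear_combination a * hp

lemma normal_form_mem_gen2_iff (ha : 0 ≤ a) (hb : 0 < b) (hcop : IsCoprime a b) {x y : ℤ}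
    (hx0 : 0 ≤ x) (hxb : x < b) : x * a + y * b ∈ gen2 a b ↔ 0 ≤ y := by
  refine ⟨?_, mem_gen2_of_nonneg hx0⟩
  rintro ⟨p, q, heq⟩
  obtain ⟨m, hm⟩ : b ∣ x - p :=
    hcop.symm.dvd_of_dvd_mul_right ⟨q - y, by linear_combination heq⟩
  have hm0 : m ≤ 0 := by nlinarith [Int.natCast_nonneg p]
  have hqy : q - y = m * a := by
    refine mul_right_cancel₀ hb.ne' ?_
    linear_combination -heq + a * hm
  nlinarith [Int.natCast_nonneg q]

lemma normal_form_sub_mem_gen2_iff (ha : 0 ≤ a) (hb : 0 < b) (hcop : IsCoprime a b)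
    {x y u v : ℤ} (hx0 : 0 ≤ x) (hxb : x < b) (hu0 : 0 ≤ u) (hub : u < b) :
    x * a + y * b - (u * a + v * b) ∈ gen2 a b ↔ (u ≤ x ∧ v ≤ y) ∨ (x < u ∧ v + a ≤ y) := by
  by_cases hxu : u ≤ x
  · have h : x * a + y * b - (u * a + v * b) = (x - u) * a + (y - v) * b := by ring
    rw [h, normal_form_mem_gen2_iff ha hb hcop (by omega) (by omega)]
    omega
  · have h : x * a + y * b - (u * a + v * b) = (x - u + b) * a + (y - v - a) * b := by ring
    rw [h, normal_form_mem_gen2_iff ha hb hcop (by omega) (by omega)]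
    omega

end TwoGenerated

theorem stmt_5_general (a b : ℤ) (ha : 0 < a) (hab : a < b) (hcop : IsCoprime a b)
    (n u v : ℤ) (hnuv : n = u * a + v * b)
    (hu0 : 0 ≤ u) (hub : u < b) (hv2 : v < 0) :
    Ap (gen2 a b) n =
      {s : ℤ | ∃ α β : ℤ, 0 ≤ α ∧ α < u ∧ 0 ≤ β ∧ β < a + v ∧ s = α * a + β * b} := by
  have hb : 0 < b := ha.trans hab
  subst hnuv
  ext s
  constructor
  · rintro ⟨hs, hsn⟩
    obtain ⟨x, y, hx0, hxb, hy0, rfl⟩ := exists_normal_form_of_mem_gen2 ha.le hb hs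
    rw [normal_form_sub_mem_gen2_iff ha.le hb hcop hx0 hxb hu0 hub] at hsn
    exact ⟨x, y, hx0, by omega, hy0, by omega, rfl⟩
  · rintro ⟨α, β, hα0, hαu, hβ0, hβ, rfl⟩
    refine ⟨mem_gen2_of_nonneg hα0 hβ0, ?_⟩
    rw [normal_form_sub_mem_gen2_iff ha.le hb hcop hα0 (by omega) hu0 hub]
    omega

theorem stmt_5 (a b : ℤ) (ha : 0 < a) (hab : a < b) (hcop : IsCoprime a b)
    (n u v : ℤ) (hn : 0 < n) (hnuv : n = u * a + v * b)
    (hu0 : 0 ≤ u) (hub : u < b) (hv1 : -a ≤ v) (hv2 : v < 0) :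
    Ap (gen2 a b) n =
      {s : ℤ | ∃ α β : ℤ, 0 ≤ α ∧ α < u ∧ 0 ≤ β ∧ β < a + v ∧ s = α * a + β * b} :=
  stmt_5_general a b ha hab hcop n u v hnuv hu0 hub hv2
end

section
/- Let a < b be coprime positive integers, S = ⟨a,b⟩, and n an integer written as n = ua + vb with 0 ≤ u < b. Then the cardinality of Ap(S,n) is 0 if v < −a, is u(a+v) if −a ≤ v < 0, and is n if v ≥ 0. -/
/-! Every integer is uniquely `x a + y b` with `0 ≤ y < a`, and it lies in `⟨a, b⟩` iff `x ≥ 0`.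
For `v < 0` (and `u < b`) this identifies `Ap(S, u a + v b)` with the box `0 ≤ x < u`,
`0 ≤ y < a + v`, which is empty when `v < -a`. For `v ≥ 0` the element `n` lies in `S`, and in any
numerical semigroup the Apéry set of an element `n` picks the least element of `S` in each residue
class mod `n`, so it has `n` elements. -/

lemma Int.ncard_Ico (m n : ℤ) : (Set.Ico m n).ncard = (n - m).toNat := by
  rw [← Finset.coe_Ico, Set.ncard_coe_finset, Int.card_Ico]

namespace IsNumSgp

variable {S : Set ℤ}

lemma mul_mem (hS : IsNumSgp S) {n : ℤ} (hn : n ∈ S) {k : ℤ} (hk : 0 ≤ k) : k * n ∈ S := by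
  lift k to ℕ using hk
  induction k with
  | zero => simpa using hS.1
  | succ k ih => simpa [add_mul] using hS.2.2.1 _ ih _ hn

lemma exists_forall_ge_mem (hS : IsNumSgp S) : ∃ c, ∀ z, c ≤ z → z ∈ S := by
  obtain ⟨c, hc⟩ := hS.2.2.2.bddAbove
  refine ⟨max c 0 + 1, fun z hz => by_contra fun hzS => ?_⟩
  have := hc ⟨by omega, hzS⟩
  omega

lemma sub_mem_of_modEq (hS : IsNumSgp S) {n s t : ℤ} (hn : n ∈ S) (hs : s ∈ S)
    (hst : s < t) (hmod : s ≡ t [ZMOD n]) : t - n ∈ S := by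
  obtain ⟨k, hk⟩ := Int.modEq_iff_dvd.mp hmod
  have hn0 := hS.2.1 n hn
  have hk1 : 1 ≤ k := by nlinarith
  have : t - n = s + (k - 1) * n := by linarith
  exact this ▸ hS.2.2.1 _ hs _ (hS.mul_mem hn (by omega))

lemma exists_mem_Ap_emod_eq (hS : IsNumSgp S) {n r : ℤ} (hr0 : 0 ≤ r)
    (hrn : r < n) : ∃ s ∈ Ap S n, s % n = r := by
  obtain ⟨c, hc⟩ := hS.exists_forall_ge_mem
  have hne : ∃ z, z ∈ S ∧ z % n = r :=
    ⟨r + |c| * n, hc _ (by nlinarith [le_abs_self c, abs_nonneg c]),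
      by rw [Int.add_mul_emod_self_right, Int.emod_eq_of_lt hr0 hrn]⟩
  obtain ⟨m, ⟨hmS, hmr⟩, hmin⟩ :=
    Int.exists_least_of_bdd ⟨0, fun z hz => hS.2.1 z hz.1⟩ hne
  refine ⟨m, ⟨hmS, fun hmn => ?_⟩, hmr⟩
  have := hmin (m - n) ⟨hmn, by rwa [Int.sub_emod_right]⟩
  omega

/-- Reduction mod `n` maps `Ap S n` bijectively onto `[0, n)`: each residue class meets `Ap S n`
in its least element of `S`. -/
theorem ncard_Ap (hS : IsNumSgp S) {n : ℤ} (hn : n ∈ S) : (Ap S n).ncard = n.toNat := by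
  rcases (hS.2.1 n hn).eq_or_lt with rfl | hpos
  · simp [Ap]
  have hbij : Set.BijOn (· % n) (Ap S n) (Set.Ico 0 n) := by
    refine ⟨fun s _ => ⟨Int.emod_nonneg _ hpos.ne', Int.emod_lt_of_pos _ hpos⟩, ?_, ?_⟩
    · intro s hs t ht hst
      by_contra hne
      rcases lt_or_gt_of_ne hne with h | h
      · exact ht.2 (hS.sub_mem_of_modEq hn hs.1 h hst)
      · exact hs.2 (hS.sub_mem_of_modEq hn ht.1 h hst.symm)
    · rintro r ⟨hr0, hrn⟩
      exact hS.exists_mem_Ap_emod_eq hr0 hrn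
  rw [← hbij.injOn.ncard_image, hbij.image_eq, Int.ncard_Ico, sub_zero]

end IsNumSgp

section gen2

variable {a b : ℤ}

lemma IsCoprime.exists_eq_mul_add_mul (hcop : IsCoprime a b) (ha : 0 < a) (z : ℤ) :
    ∃ x y : ℤ, z = x * a + y * b ∧ 0 ≤ y ∧ y < a := by
  obtain ⟨p, q, hpq⟩ := hcop
  have hdvd : a ∣ z - z * q % a * b :=
    ⟨z * p + z * q / a * b, by linear_combination (-z) * hpq - b * Int.emod_def (z * q) a⟩
  exact ⟨(z - z * q % a * b) / a, z * q % a, by rw [Int.ediv_mul_cancel hdvd]; ring,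
    Int.emod_nonneg _ ha.ne', Int.emod_lt_of_pos _ ha⟩

lemma IsCoprime.eq_of_mul_add_mul_eq (hcop : IsCoprime a b) (ha : 0 < a) {x₁ y₁ x₂ y₂ : ℤ}
    (h : x₁ * a + y₁ * b = x₂ * a + y₂ * b) (hy₁ : 0 ≤ y₁) (hy₁a : y₁ < a) (hy₂ : 0 ≤ y₂)
    (hy₂a : y₂ < a) : x₁ = x₂ ∧ y₁ = y₂ := by
  have hdvd : a ∣ y₂ - y₁ := hcop.dvd_of_dvd_mul_right ⟨x₁ - x₂, by linarith⟩
  have hy : y₂ - y₁ = 0 := Int.eq_zero_of_abs_lt_dvd hdvd (abs_sub_lt_iff.2 ⟨by omega, by omega⟩)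
  refine ⟨mul_right_cancel₀ ha.ne' ?_, by omega⟩
  linear_combination h + b * hy

lemma mem_gen2_iff (hcop : IsCoprime a b) (ha : 0 < a) (hb : 0 < b) {x y : ℤ} (hy : 0 ≤ y)
    (hya : y < a) : x * a + y * b ∈ gen2 a b ↔ 0 ≤ x := by
  refine ⟨fun ⟨m, k, hmk⟩ => ?_, fun hx => mem_gen2_of_nonneg hx hy⟩
  have hrepr : (m + k / a * b) * a + k % a * b = x * a + y * b := by
    rw [hmk]; linear_combination b * Int.mul_ediv_add_emod (k : ℤ) a
  rw [← (hcop.eq_of_mul_add_mul_eq ha hrepr (Int.emod_nonneg _ ha.ne')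
    (Int.emod_lt_of_pos _ ha) hy hya).1]
  have : 0 ≤ (k : ℤ) / a := Int.ediv_nonneg k.cast_nonneg ha.le
  positivity

lemma isNumSgp_gen2 (hcop : IsCoprime a b) (ha : 0 < a) (hb : 0 < b) : IsNumSgp (gen2 a b) := by
  refine ⟨⟨0, 0, by simp⟩, fun _ ⟨x, y, h⟩ => h ▸ by positivity, ?_, ?_⟩
  · rintro _ ⟨x₁, y₁, rfl⟩ _ ⟨x₂, y₂, rfl⟩
    exact ⟨x₁ + x₂, y₁ + y₂, by push_cast; ring⟩
  · refine (Set.finite_Ico 0 (a * b)).subset fun z ⟨hz0, hzS⟩ => ⟨hz0, ?_⟩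
    obtain ⟨x, y, rfl, hy, hya⟩ := hcop.exists_eq_mul_add_mul ha z
    rw [mem_gen2_iff hcop ha hb hy hya] at hzS
    nlinarith

theorem Ap_gen2_eq_image (hcop : IsCoprime a b) (ha : 0 < a) (hb : 0 < b) {u v : ℤ}
    (hub : u < b) (hv : v < 0) :
    Ap (gen2 a b) (u * a + v * b) =
      (fun p : ℤ × ℤ => p.1 * a + p.2 * b) '' Set.Ico 0 u ×ˢ Set.Ico 0 (a + v) := by
  ext s
  constructor
  · rintro ⟨hs, hsn⟩
    obtain ⟨x, y, rfl, hy, hya⟩ := hcop.exists_eq_mul_add_mul ha s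
    have hx := (mem_gen2_iff hcop ha hb hy hya).mp hs
    have hxu : x < u := by
      by_contra! hux
      refine hsn ?_
      convert mem_gen2_of_nonneg (sub_nonneg.2 hux) (by omega : 0 ≤ y - v) using 1
      ring
    have hyv : y < a + v := by
      by_contra! hyv
      refine hsn ?_
      convert mem_gen2_of_nonneg (by omega : 0 ≤ x - u + b) (by omega : 0 ≤ y - v - a) using 1
      ring
    exact ⟨(x, y), ⟨⟨hx, hxu⟩, hy, hyv⟩, rfl⟩
  · rintro ⟨⟨x, y⟩, ⟨⟨hx, hxu⟩, hy, hyv⟩, rfl⟩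
    refine ⟨mem_gen2_of_nonneg hx hy, fun hmem => ?_⟩
    have hrepr : x * a + y * b - (u * a + v * b) = (x - u) * a + (y - v) * b := by ring
    rw [hrepr, mem_gen2_iff hcop ha hb (by omega) (by omega)] at hmem
    omega

theorem ncard_Ap_gen2_of_neg (hcop : IsCoprime a b) (ha : 0 < a) (hb : 0 < b) {u v : ℤ}
    (hub : u < b) (hv : v < 0) :
    (Ap (gen2 a b) (u * a + v * b)).ncard = u.toNat * (a + v).toNat := by
  have hinj :
      Set.InjOn (fun p : ℤ × ℤ => p.1 * a + p.2 * b) (Set.Ico 0 u ×ˢ Set.Ico 0 (a + v)) := by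
    rintro ⟨x₁, y₁⟩ ⟨-, hy₁, hy₁a⟩ ⟨x₂, y₂⟩ ⟨-, hy₂, hy₂a⟩ h
    obtain ⟨rfl, rfl⟩ := hcop.eq_of_mul_add_mul_eq ha h hy₁ (by omega) hy₂ (by omega)
    rfl
  rw [Ap_gen2_eq_image hcop ha hb hub hv, hinj.ncard_image, Set.ncard_prod,
    Int.ncard_Ico, Int.ncard_Ico, sub_zero, sub_zero]

end gen2

theorem stmt_7 (a b : ℤ) (ha : 0 < a) (hab : a < b) (hcop : IsCoprime a b)
    (n u v : ℤ) (hnuv : n = u * a + v * b) (hu0 : 0 ≤ u) (hub : u < b) :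
    (v < -a → (Ap (gen2 a b) n).ncard = 0) ∧
    (-a ≤ v → v < 0 → ((Ap (gen2 a b) n).ncard : ℤ) = u * (a + v)) ∧
    (0 ≤ v → ((Ap (gen2 a b) n).ncard : ℤ) = n) := by
  have hb : 0 < b := ha.trans hab
  subst hnuv
  refine ⟨fun hv => ?_, fun hva hv => ?_, fun hv => ?_⟩
  · rw [ncard_Ap_gen2_of_neg hcop ha hb hub (by omega),
      Int.toNat_of_nonpos (show a + v ≤ 0 by omega), mul_zero]
  · rw [ncard_Ap_gen2_of_neg hcop ha hb hub hv]
    push_cast [Int.toNat_of_nonneg hu0, Int.toNat_of_nonneg (by omega : 0 ≤ a + v)]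
    rfl
  · have hS := isNumSgp_gen2 hcop ha hb
    have hn : u * a + v * b ∈ gen2 a b := mem_gen2_of_nonneg hu0 hv
    rw [hS.ncard_Ap hn, Int.toNat_of_nonneg (hS.2.1 _ hn)]
end

section
/- Let S be a numerical semigroup, n a positive integer, and m any integer with m ≥ 2c − 1 where c is the conductor of S. Then the map f(s) = m + n − s is a bijection from Ap(S,n) onto D(m+n) \ D(m). -/
/-!
The map `s ↦ m + n - s` is an involution of `ℤ`, so it suffices that it maps each set into the
other. A divisor `t` of `m + n` that is not a divisor of `m` has `m - t ∉ S`, so `m + n - t`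
lies in the Apéry set. Conversely, for `s` in the Apéry set the gap `s - n` lies below `c`, so
`m + n - s = m - (s - n) ≥ c` lies in `S` once `m ≥ 2c - 1`.
-/

lemma lt_of_notMem_of_forall_le_mem {S : Set ℤ} {c x : ℤ} (hc : ∀ y, c ≤ y → y ∈ S)
    (hx : x ∉ S) : x < c :=
  lt_of_not_ge fun h => hx (hc x h)

lemma sub_mem_of_notMem {S : Set ℤ} {c m x : ℤ} (hc : ∀ y, c ≤ y → y ∈ S)
    (hm : 2 * c - 1 ≤ m) (hx : x ∉ S) : m - x ∈ S := by
  have := lt_of_notMem_of_forall_le_mem hc hx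
  exact hc _ (by omega)

lemma mapsTo_diff_divs_ap (S : Set ℤ) (m n : ℤ) :
    Set.MapsTo (fun t => m + n - t) (divs S (m + n) \ divs S m) (Ap S n) := by
  rintro t ⟨⟨htS, hcompl⟩, hnot⟩
  refine ⟨hcompl, ?_⟩
  rw [show m + n - t - n = m - t by ring]
  exact fun h => hnot ⟨htS, h⟩

lemma mapsTo_ap_diff_divs {S : Set ℤ} {c : ℤ} (hc : ∀ y, c ≤ y → y ∈ S) (n : ℤ) {m : ℤ}
    (hm : 2 * c - 1 ≤ m) :
    Set.MapsTo (fun s => m + n - s) (Ap S n) (divs S (m + n) \ divs S m) := by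
  rintro s ⟨hsS, hsn⟩
  have hm_sub : m - (m + n - s) = s - n := by ring
  refine ⟨⟨?_, by rwa [sub_sub_cancel]⟩, fun hd => hsn (hm_sub ▸ hd.2)⟩
  simpa only [show m - (s - n) = m + n - s by ring] using sub_mem_of_notMem hc hm hsn

lemma invOn_sub_self {G : Type*} [AddCommGroup G] (a : G) (s t : Set G) :
    Set.InvOn (fun x => a - x) (fun x => a - x) s t :=
  ⟨fun x _ => sub_sub_cancel a x, fun x _ => sub_sub_cancel a x⟩

theorem stmt_8_general (S : Set ℤ) (c : ℤ) (hc : IsConductor S c)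
    (n : ℤ) (m : ℤ) (hm : 2 * c - 1 ≤ m) :
    Set.BijOn (fun s => m + n - s) (Ap S n) (divs S (m + n) \ divs S m) :=
  (invOn_sub_self (m + n) _ _).bijOn (mapsTo_ap_diff_divs hc.1 n hm)
    (mapsTo_diff_divs_ap S m n)

theorem stmt_8 (S : Set ℤ) (hS : IsNumSgp S) (c : ℤ) (hc : IsConductor S c)
    (n : ℤ) (hn : 0 < n) (m : ℤ) (hm : 2 * c - 1 ≤ m) :
    Set.BijOn (fun s => m + n - s) (Ap S n) (divs S (m + n) \ divs S m) :=
  stmt_8_general S c hc n m hm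
end

section
/- Let S be a symmetric numerical semigroup with Frobenius number F(S), n a positive integer, and m ≥ 2c − 1. Then D(m+n) \ D(m) = (Ap(S,n) + m − F(S)), the translate of the Apéry set by m − F(S). -/
/-!
Write `t = s + (m - F)`. Symmetry turns `m - t ∉ S` into `s ∈ S` and `m + n - t ∈ S` into
`s - n ∉ S`, so `t ∈ D(m + n) \ D(m)` says exactly that `s ∈ Ap(S, n)`, up to the condition
`t ∈ S`; this follows from `s ∈ S` because `m - F ∈ S` once `m > 2F`.
-/

section Symmetric

variable {S : Set ℤ} {F : ℤ}

theorem mem_divs_sdiff_iff (hsym : ∀ r : ℤ, r ∈ S ↔ F - r ∉ S) (m n t : ℤ) :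
    t ∈ divs S (m + n) \ divs S m ↔ t ∈ S ∧ t - m + F ∈ Ap S n := by
  have hm : m - t ∉ S ↔ t - m + F ∈ S := by
    rw [hsym (t - m + F), show F - (t - m + F) = m - t by ring]
  have hmn : m + n - t ∈ S ↔ t - m + F - n ∉ S := by
    rw [hsym, show F - (m + n - t) = t - m + F - n by ring]
  simp only [divs, Ap, Set.mem_sdiff, Set.mem_ofPred_eq, ← hm, hmn]
  tauto

theorem divs_sdiff_eq_image_Ap (hadd : ∀ x ∈ S, ∀ y ∈ S, x + y ∈ S)
    (hsym : ∀ r : ℤ, r ∈ S ↔ F - r ∉ S) {m : ℤ} (hmF : m - F ∈ S) (n : ℤ) :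
    divs S (m + n) \ divs S m = (fun s => s + m - F) '' Ap S n := by
  ext t
  rw [mem_divs_sdiff_iff hsym]
  constructor
  · rintro ⟨-, hs⟩
    exact ⟨_, hs, by ring⟩
  · rintro ⟨s, hs, rfl⟩
    refine ⟨?_, by simpa only [show s + m - F - m + F = s by ring] using hs⟩
    simpa only [add_sub_assoc] using hadd s hs.1 _ hmF

end Symmetric

theorem stmt_9_general (S : Set ℤ) (hS : IsNumSgp S) (F : ℤ)
    (hF : F ∉ S ∧ ∀ x, F < x → x ∈ S)
    (hsym : ∀ r : ℤ, r ∈ S ↔ F - r ∉ S)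
    (n : ℤ) (m : ℤ) (hm : 2 * (F + 1) - 1 ≤ m) :
    divs S (m + n) \ divs S m = (fun s => s + m - F) '' Ap S n := by
  obtain ⟨-, -, hadd, -⟩ := hS
  exact divs_sdiff_eq_image_Ap hadd hsym (hF.2 _ (by linarith)) n

theorem stmt_9 (S : Set ℤ) (hS : IsNumSgp S) (F : ℤ)
    (hF : F ∉ S ∧ ∀ x, F < x → x ∈ S)
    (hsym : ∀ r : ℤ, r ∈ S ↔ F - r ∉ S)
    (n : ℤ) (hn : 0 < n) (m : ℤ) (hm : 2 * (F + 1) - 1 ≤ m) :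
    divs S (m + n) \ divs S m = (fun s => s + m - F) '' Ap S n :=
  stmt_9_general S hS F hF hsym n m hm
end

section
/- Let a < b be coprime integers greater than 2, S = ⟨a,b⟩, m ≥ 2c − 1, and i < j < k in {0,…,b−1}. Then (D(m ⊕ i) ∩ D(m ⊕ k)) \ D(m) ⊆ D(m ⊕ j) \ D(m). -/
/-! Write `m - s = L a + w b` with `0 ≤ L < b`; then `s ∉ D(m)` means `w < 0`, and
`s ∈ D(m ⊕ x)` means `⌊x a / b⌋ ≤ w + ⌊(L + x) / b⌋ a`. Since `w < 0`, the condition at `i` forces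
`L + i ≥ b`, so `⌊(L + x) / b⌋ = 1` for all `i ≤ x < b`, and the condition becomes
`⌊x a / b⌋ ≤ w + a`, which is inherited downwards from `k` to `j`. -/

lemma exists_eq_mul_add_mul_of_isCoprime {a b : ℤ} (hb : 0 < b) (hcop : IsCoprime a b) (n : ℤ) :
    ∃ x y : ℤ, 0 ≤ x ∧ x < b ∧ n = x * a + y * b := by
  obtain ⟨u, v, huv⟩ := hcop
  refine ⟨n * u % b, n * v + n * u / b * a, Int.emod_nonneg _ hb.ne', Int.emod_lt_of_pos _ hb, ?_⟩
  linear_combination (-a) * Int.emod_add_mul_ediv (n * u) b - n * huv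

lemma eq_of_mul_add_mul_eq {a b : ℤ} (hb : 0 < b) (hcop : IsCoprime a b) {x y x' y' : ℤ}
    (hx0 : 0 ≤ x) (hxb : x < b) (hx'0 : 0 ≤ x') (hx'b : x' < b)
    (h : x * a + y * b = x' * a + y' * b) : x = x' ∧ y = y' := by
  have hdvd : b ∣ (x' - x) * a := ⟨y - y', by linear_combination -h⟩
  have hmod : x ≡ x' [ZMOD b] := (Int.modEq_iff_dvd).mpr (hcop.symm.dvd_of_dvd_mul_right hdvd)
  have hx : x = x' := by
    rwa [Int.ModEq, Int.emod_eq_of_lt hx0 hxb, Int.emod_eq_of_lt hx'0 hx'b] at hmod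
  subst hx
  exact ⟨rfl, mul_right_cancel₀ hb.ne' (by linarith)⟩

lemma mem_gen2_iff_exists {a b : ℤ} (ha : 0 < a) (hb : 0 < b) {n : ℤ} :
    n ∈ gen2 a b ↔ ∃ x y : ℤ, 0 ≤ x ∧ x < b ∧ 0 ≤ y ∧ n = x * a + y * b := by
  constructor
  · rintro ⟨x, y, rfl⟩
    refine ⟨x % b, y + x / b * a, Int.emod_nonneg _ hb.ne', Int.emod_lt_of_pos _ hb,
      by positivity, ?_⟩
    linear_combination (-a) * Int.emod_add_mul_ediv (x : ℤ) b
  · rintro ⟨x, y, hx0, -, hy0, rfl⟩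
    lift x to ℕ using hx0
    lift y to ℕ using hy0
    exact ⟨x, y, rfl⟩

lemma mul_add_mul_mem_gen2_iff {a b : ℤ} (ha : 0 < a) (hb : 0 < b) (hcop : IsCoprime a b)
    {x : ℤ} (hx0 : 0 ≤ x) (hxb : x < b) (y : ℤ) :
    x * a + y * b ∈ gen2 a b ↔ 0 ≤ y := by
  rw [mem_gen2_iff_exists ha hb]
  constructor
  · rintro ⟨x', y', hx'0, hx'b, hy'0, h⟩
    obtain ⟨-, rfl⟩ := eq_of_mul_add_mul_eq hb hcop hx0 hxb hx'0 hx'b h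
    exact hy'0
  · intro hy0
    exact ⟨x, y, hx0, hxb, hy0, rfl⟩

lemma add_emod_mem_gen2_iff {a b : ℤ} (ha : 0 < a) (hb : 0 < b) (hcop : IsCoprime a b)
    (L w x : ℤ) :
    L * a + w * b + x * a % b ∈ gen2 a b ↔ x * a / b ≤ w + (L + x) / b * a := by
  have hsplit : L * a + w * b + x * a % b
      = (L + x) % b * a + (w + (L + x) / b * a - x * a / b) * b := by
    linear_combination Int.emod_add_mul_ediv (x * a) b - a * Int.emod_add_mul_ediv (L + x) b
  rw [hsplit, mul_add_mul_mem_gen2_iff ha hb hcop (Int.emod_nonneg _ hb.ne')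
    (Int.emod_lt_of_pos _ hb)]
  constructor <;> intro h <;> linarith

lemma mul_ediv_le_add_ediv_mul_of_le_of_le {a b L w i j k : ℤ} (ha : 0 < a) (hb : 0 < b)
    (hLb : L < b) (hw : w < 0) (hi0 : 0 ≤ i) (hij : i ≤ j) (hjk : j ≤ k) (hkb : k < b)
    (hi : i * a / b ≤ w + (L + i) / b * a) (hk : k * a / b ≤ w + (L + k) / b * a) :
    j * a / b ≤ w + (L + j) / b * a := by
  have hLi : 1 ≤ (L + i) / b := by
    by_contra! h
    have : 0 ≤ i * a / b := Int.ediv_nonneg (by positivity) hb.le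
    nlinarith
  have hLk : (L + k) / b ≤ 1 := by
    have : (L + k) / b < 2 := (Int.ediv_lt_iff_lt_mul hb).mpr (by linarith)
    omega
  have hLj : 1 ≤ (L + j) / b := hLi.trans (Int.ediv_le_ediv hb (by linarith))
  calc j * a / b ≤ k * a / b := Int.ediv_le_ediv hb (by nlinarith)
    _ ≤ w + (L + k) / b * a := hk
    _ ≤ w + (L + j) / b * a := by nlinarith

theorem stmt_11_general (a b : ℤ) (ha : 2 < a) (hcop : IsCoprime a b)
    (m : ℤ)
    (i j k : ℤ) (hi0 : 0 ≤ i) (hij : i < j) (hjk : j < k) (hkb : k ≤ b - 1) :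
    (divs (gen2 a b) (m + (i * a) % b) ∩ divs (gen2 a b) (m + (k * a) % b))
      \ divs (gen2 a b) m
      ⊆ divs (gen2 a b) (m + (j * a) % b) \ divs (gen2 a b) m := by
  have ha0 : 0 < a := by linarith
  have hb : 0 < b := by linarith
  rintro s ⟨⟨⟨hs, hsi⟩, -, hsk⟩, hsm⟩
  refine ⟨⟨hs, ?_⟩, hsm⟩
  obtain ⟨L, w, hL0, hLb, hmL⟩ := exists_eq_mul_add_mul_of_isCoprime hb hcop (m - s)
  have hw : w < 0 := by
    by_contra! hw
    exact hsm ⟨hs, hmL ▸ (mul_add_mul_mem_gen2_iff ha0 hb hcop hL0 hLb w).mpr hw⟩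
  have hshift (x : ℤ) : m + x * a % b - s = L * a + w * b + x * a % b := by linarith
  rw [hshift, add_emod_mem_gen2_iff ha0 hb hcop] at hsi hsk ⊢
  exact mul_ediv_le_add_ediv_mul_of_le_of_le ha0 hb hLb hw hi0 hij.le hjk.le (by linarith) hsi hsk

theorem stmt_11 (a b : ℤ) (ha : 2 < a) (hab : a < b) (hcop : IsCoprime a b)
    (m : ℤ) (hm : 2 * (a * b - a - b + 1) - 1 ≤ m)
    (i j k : ℤ) (hi0 : 0 ≤ i) (hij : i < j) (hjk : j < k) (hkb : k ≤ b - 1) :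
    (divs (gen2 a b) (m + (i * a) % b) ∩ divs (gen2 a b) (m + (k * a) % b))
      \ divs (gen2 a b) m
      ⊆ divs (gen2 a b) (m + (j * a) % b) \ divs (gen2 a b) m :=
  stmt_11_general a b ha hcop m i j k hi0 hij hjk hkb
end

section
/- Let a < b be coprime integers greater than 2, S = ⟨a,b⟩, m ≥ 2c − 1, and n, n′ ∈ ℕ such that D(m+n) ∩ [m, m+b) ≠ {m, m+1, …, m+b−1}. Then n − n′ ∈ S if and only if D(m+n′) ∩ [m, m+b) ⊆ D(m+n) ∩ [m, m+b). -/
/-!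
Every integer `x` is congruent modulo `b` to `i * a` for a unique `0 ≤ i < b`, and `x ∈ ⟨a, b⟩`
exactly when `i * a ≤ x`. Since every element of the window `[m, m + b)` lies above the conductor,
the inclusion of windows says that `n' - r ∈ S → n - r ∈ S` for `0 ≤ r < b`. If `n - n'` were a gap,
congruent to `δ * a`, then transporting the elements `i * a ≤ n'` of the classes `i + δ < b` along
this implication gives `(i + δ) * a ≤ n`: taking `i + δ = b - 1` contradicts the window of `m + n`
not being full, and otherwise `i = ⌊n' / a⌋` contradicts `n - n' ≤ δ * a - b`.
-/

open Set

lemma Int.ModEq.le_of_lt_add {m x y : ℤ} (h : x ≡ y [ZMOD m]) (hlt : x < y + m) : x ≤ y := by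
  obtain ⟨k, hk⟩ := h.dvd
  rcases le_or_gt m 0 with hm | hm
  · linarith
  · have : -1 < k := by nlinarith
    nlinarith

section gen2

variable {a b : ℤ}

lemma add_mem_gen2 {x y : ℤ} (hx : x ∈ gen2 a b) (hy : y ∈ gen2 a b) : x + y ∈ gen2 a b := by
  obtain ⟨p, q, rfl⟩ := hx
  obtain ⟨r, s, rfl⟩ := hy
  exact ⟨p + r, q + s, by push_cast; ring⟩

lemma mem_gen2_of_modEq_of_le {i x : ℤ} (hb : 0 < b) (hi : 0 ≤ i) (hx : x ≡ i * a [ZMOD b])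
    (hle : i * a ≤ x) : x ∈ gen2 a b := by
  obtain ⟨k, hk⟩ := hx.symm.dvd
  have hk0 : 0 ≤ k := by nlinarith
  refine ⟨i.toNat, k.toNat, ?_⟩
  rw [Int.toNat_of_nonneg hi, Int.toNat_of_nonneg hk0]
  linear_combination hk

lemma le_of_mem_gen2_of_modEq (hcop : IsCoprime a b) (ha : 0 ≤ a) (hb : 0 ≤ b) {i x : ℤ}
    (hib : i < b) (hx : x ≡ i * a [ZMOD b]) (hmem : x ∈ gen2 a b) : i * a ≤ x := by
  obtain ⟨p, q, rfl⟩ := hmem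
  have hpa : b ∣ (i - p) * a := by
    obtain ⟨k, hk⟩ := hx.dvd
    exact ⟨k + q, by linear_combination hk⟩
  have hp : (p : ℤ) ≡ i [ZMOD b] := Int.modEq_iff_dvd.mpr (hcop.symm.dvd_of_dvd_mul_right hpa)
  have hip : i ≤ p := hp.symm.le_of_lt_add (by omega)
  nlinarith [Int.natCast_nonneg q]

lemma exists_modEq_mul (hcop : IsCoprime a b) (hb : 0 < b) (x : ℤ) :
    ∃ i, 0 ≤ i ∧ i < b ∧ x ≡ i * a [ZMOD b] := by
  obtain ⟨u, v, huv⟩ := hcop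
  refine ⟨x * u % b, Int.emod_nonneg _ hb.ne', Int.emod_lt_of_pos _ hb, ?_⟩
  refine Int.ModEq.trans ?_ ((Int.mod_modEq (x * u) b).symm.mul_right a)
  exact (Int.modEq_iff_dvd).mpr ⟨-(x * v), by linear_combination x * huv⟩

lemma mem_gen2_of_conductor_le (hcop : IsCoprime a b) (ha : 0 ≤ a) (hb : 0 < b) {x : ℤ}
    (hx : a * b - a - b + 1 ≤ x) : x ∈ gen2 a b := by
  obtain ⟨i, hi0, hib, hxi⟩ := exists_modEq_mul hcop hb x
  exact mem_gen2_of_modEq_of_le hb hi0 hxi (hxi.symm.le_of_lt_add (by nlinarith))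

lemma exists_sub_mem_gen2_modEq (hb : 0 < b) {i y : ℤ} (hi : 0 ≤ i) (hy : i * a ≤ y) :
    ∃ r, 0 ≤ r ∧ r < b ∧ y - r ≡ i * a [ZMOD b] ∧ y - r ∈ gen2 a b := by
  have hyr : y - (y - i * a) % b ≡ i * a [ZMOD b] := by
    simpa using (Int.mod_modEq (y - i * a) b).sub_left y
  have hr0 := Int.emod_nonneg (y - i * a) hb.ne'
  have hrb := Int.emod_lt_of_pos (y - i * a) hb
  exact ⟨_, hr0, hrb, hyr,
    mem_gen2_of_modEq_of_le hb hi hyr (hyr.symm.le_of_lt_add (by linarith))⟩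

lemma add_mul_le_of_forall_sub_mem (hcop : IsCoprime a b) (ha : 0 ≤ a) (hb : 0 < b)
    {n n' : ℤ} (H : ∀ r, 0 ≤ r → r < b → n' - r ∈ gen2 a b → n - r ∈ gen2 a b)
    {δ i : ℤ} (hδ : n - n' ≡ δ * a [ZMOD b]) (hi : 0 ≤ i) (hin' : i * a ≤ n') (hib : i + δ < b) :
    (i + δ) * a ≤ n := by
  obtain ⟨r, hr0, hrb, hn'r, hmem⟩ := exists_sub_mem_gen2_modEq hb hi hin'
  have hnr : n - r ≡ (i + δ) * a [ZMOD b] := by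
    simpa [add_mul, add_comm] using hδ.add hn'r
  linarith [le_of_mem_gen2_of_modEq hcop ha hb.le hib hnr (H r hr0 hrb hmem)]

theorem sub_mem_gen2_of_forall_sub_mem (hcop : IsCoprime a b) (ha : 0 < a) (hab : a < b)
    {n n' : ℤ} (hn' : 0 ≤ n') (hn : n < (b - 1) * a)
    (H : ∀ r, 0 ≤ r → r < b → n' - r ∈ gen2 a b → n - r ∈ gen2 a b) : n - n' ∈ gen2 a b := by
  have hb : 0 < b := ha.trans hab
  obtain ⟨δ, hδ0, hδb, hδ⟩ := exists_modEq_mul hcop hb (n - n')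
  by_contra hgap
  have hlt : n - n' < δ * a := not_le.mp fun h => hgap (mem_gen2_of_modEq_of_le hb hδ0 hδ h)
  have hle : n - n' ≤ δ * a - b := by
    by_contra! h
    exact hlt.not_ge (hδ.symm.le_of_lt_add (by linarith))
  rcases le_or_gt ((b - 1 - δ) * a) n' with hfit | hfit
  · have := add_mul_le_of_forall_sub_mem hcop ha.le hb H hδ (by omega) hfit (by omega)
    simp only [sub_add_cancel] at this
    linarith
  · have hq0 : 0 ≤ n' / a := Int.ediv_nonneg hn' ha.le
    have hq : n' / a * a ≤ n' := Int.ediv_mul_le n' ha.ne'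
    have hq' : n' < (n' / a + 1) * a := Int.lt_ediv_add_one_mul_self n' ha
    have hqb : n' / a < b - 1 - δ := lt_of_mul_lt_mul_right (hq.trans_lt hfit) ha.le
    have := add_mul_le_of_forall_sub_mem hcop ha.le hb H hδ hq0 hq (by omega)
    linarith

end gen2

lemma divs_inter_Ico_subset_iff {S : Set ℤ} {m b x y : ℤ} (hS : ∀ t, m ≤ t → t ∈ S) :
    divs S (m + x) ∩ Ico m (m + b) ⊆ divs S (m + y) ∩ Ico m (m + b) ↔
      ∀ r, 0 ≤ r → r < b → x - r ∈ S → y - r ∈ S := by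
  constructor
  · intro h r hr0 hrb hxr
    have hmem : m + r ∈ divs S (m + x) ∩ Ico m (m + b) :=
      ⟨⟨hS _ (by linarith), by rwa [add_sub_add_left_eq_sub]⟩, by linarith, by linarith⟩
    simpa only [add_sub_add_left_eq_sub] using (h hmem).1.2
  · rintro h t ⟨⟨htS, hxt⟩, ht⟩
    have hyt := h (t - m) (by linarith [ht.1]) (by linarith [ht.2]) (by convert hxt using 1; ring)
    exact ⟨⟨htS, by convert hyt using 1; ring⟩, ht⟩

theorem stmt_13_general (a b : ℤ) (ha : 2 < a) (hab : a < b) (hcop : IsCoprime a b)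
    (m : ℤ) (hm : 2 * (a * b - a - b + 1) - 1 ≤ m)
    (n n' : ℤ) (hn' : 0 ≤ n')
    (hne : divs (gen2 a b) (m + n) ∩ Set.Ico m (m + b) ≠ Set.Ico m (m + b)) :
    n - n' ∈ gen2 a b ↔
      divs (gen2 a b) (m + n') ∩ Set.Ico m (m + b) ⊆
        divs (gen2 a b) (m + n) ∩ Set.Ico m (m + b) := by
  have hb : 0 < b := by linarith
  have hS : ∀ t, m ≤ t → t ∈ gen2 a b := fun t ht =>
    mem_gen2_of_conductor_le hcop (by linarith) hb (by nlinarith)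
  rw [divs_inter_Ico_subset_iff hS]
  constructor
  · intro h r _ _ hr
    simpa using add_mem_gen2 h hr
  · refine sub_mem_gen2_of_forall_sub_mem hcop (by linarith) hab hn' ?_
    by_contra! hn
    refine hne (inter_eq_right.mpr fun t ht => ⟨hS t ht.1, ?_⟩)
    exact mem_gen2_of_conductor_le hcop (by linarith) hb (by linarith [ht.2])

theorem stmt_13 (a b : ℤ) (ha : 2 < a) (hab : a < b) (hcop : IsCoprime a b)
    (m : ℤ) (hm : 2 * (a * b - a - b + 1) - 1 ≤ m)
    (n n' : ℤ) (hn : 0 ≤ n) (hn' : 0 ≤ n')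
    (hne : divs (gen2 a b) (m + n) ∩ Set.Ico m (m + b) ≠ Set.Ico m (m + b)) :
    n - n' ∈ gen2 a b ↔
      divs (gen2 a b) (m + n') ∩ Set.Ico m (m + b) ⊆
        divs (gen2 a b) (m + n) ∩ Set.Ico m (m + b) :=
  stmt_13_general a b ha hab hcop m hm n n' hn' hne
end

section
/- Let S be a numerical semigroup with conductor c, enumerate S = {ρ₁ = 0 < ρ₂ < ⋯}, and let m ≥ 2c − 1. For all t ≥ r ≥ 1, #(D(m + ρₜ) ∩ [0, m)) ≥ #(D(m + ρᵣ) ∩ [0, m)). -/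
/-!
For `0 ≤ a`, the reflection `g ↦ m + a - g` maps the gaps of `S` above `a` bijectively onto the
elements of `S ∩ [0, m)` that are not divisors of `m + a`: a gap `g` lies below `c`, so
`m + a - g ≥ c` is in `S` because `m ≥ 2c - 1`. Hence `#(D(m + a) ∩ [0, m))` equals
`#(S ∩ [0, m))` minus the number of gaps above `a`, and the latter decreases as `a` grows.
-/

open Set

section Divisors

variable {S : Set ℤ} {c m a : ℤ}

lemma lt_of_notMem_of_conductor (hc : ∀ n, c ≤ n → n ∈ S) {g : ℤ} (hg : g ∉ S) : g < c :=
  lt_of_not_ge fun h => hg (hc g h)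

lemma finite_Ioi_sdiff_of_conductor (hc : ∀ n, c ≤ n → n ∈ S) (a : ℤ) : (Ioi a \ S).Finite :=
  (finite_Ioo a c).subset fun _ ⟨hag, hgS⟩ => ⟨hag, lt_of_notMem_of_conductor hc hgS⟩

lemma image_gaps_eq_sdiff_divs (hc : ∀ n, c ≤ n → n ∈ S) (hm : 2 * c - 1 ≤ m) (ha : 0 ≤ a) :
    (fun g => m + a - g) '' (Ioi a \ S) = (S ∩ Ico 0 m) \ (divs S (m + a) ∩ Ico 0 m) := by
  ext s
  constructor
  · rintro ⟨g, ⟨hag : a < g, hgS⟩, rfl⟩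
    dsimp only
    have hgc : g < c := lt_of_notMem_of_conductor hc hgS
    refine ⟨⟨hc _ (by omega), by omega, by omega⟩, fun ⟨⟨_, hg⟩, _⟩ => hgS ?_⟩
    simpa using hg
  · rintro ⟨⟨hsS, hs0, hsm⟩, hsA⟩
    refine ⟨m + a - s, ⟨show a < m + a - s by omega, fun h => hsA ⟨⟨hsS, h⟩, hs0, hsm⟩⟩, ?_⟩
    ring

lemma ncard_divs_add_ncard_gaps (hc : ∀ n, c ≤ n → n ∈ S) (hm : 2 * c - 1 ≤ m) (ha : 0 ≤ a) :
    (divs S (m + a) ∩ Ico 0 m).ncard + (Ioi a \ S).ncard = (S ∩ Ico 0 m).ncard := by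
  have hsub : divs S (m + a) ∩ Ico 0 m ⊆ S ∩ Ico 0 m := fun s hs => ⟨hs.1.1, hs.2⟩
  rw [← ncard_sdiff_add_ncard_of_subset hsub ((finite_Ico 0 m).subset inter_subset_right),
    ← image_gaps_eq_sdiff_divs hc hm ha, ncard_image_of_injective _ sub_right_injective, add_comm]

lemma ncard_divs_le_ncard_divs (hc : ∀ n, c ≤ n → n ∈ S) (hm : 2 * c - 1 ≤ m) {b : ℤ}
    (ha : 0 ≤ a) (hab : a ≤ b) :
    (divs S (m + a) ∩ Ico 0 m).ncard ≤ (divs S (m + b) ∩ Ico 0 m).ncard := by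
  have hgaps : (Ioi b \ S).ncard ≤ (Ioi a \ S).ncard :=
    ncard_le_ncard (sdiff_subset_sdiff_left (Ioi_subset_Ioi hab))
      (finite_Ioi_sdiff_of_conductor hc a)
  have := ncard_divs_add_ncard_gaps hc hm ha
  have := ncard_divs_add_ncard_gaps hc hm (ha.trans hab)
  omega

end Divisors

theorem stmt_15_general (S : Set ℤ) (c : ℤ) (hc : IsConductor S c)
    (ρ : ℕ → ℤ) (hρ1 : ρ 1 = 0)
    (hmono : ∀ i j, 1 ≤ i → i < j → ρ i < ρ j)
    (m : ℤ) (hm : 2 * c - 1 ≤ m) (r t : ℕ) (hr : 1 ≤ r) (hrt : r ≤ t) :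
    (divs S (m + ρ r) ∩ Set.Ico 0 m).ncard ≤
      (divs S (m + ρ t) ∩ Set.Ico 0 m).ncard := by
  have hρ_mono : ∀ i j, 1 ≤ i → i ≤ j → ρ i ≤ ρ j := fun i j hi hij =>
    hij.eq_or_lt.elim (fun h => h ▸ le_rfl) fun h => (hmono i j hi h).le
  exact ncard_divs_le_ncard_divs hc.1 hm (hρ1 ▸ hρ_mono 1 r le_rfl hr) (hρ_mono r t hr hrt)

theorem stmt_15 (S : Set ℤ) (hS : IsNumSgp S) (c : ℤ) (hc : IsConductor S c)
    (ρ : ℕ → ℤ) (hρ1 : ρ 1 = 0)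
    (hmono : ∀ i j, 1 ≤ i → i < j → ρ i < ρ j)
    (hrange : S = {x | ∃ k, 1 ≤ k ∧ ρ k = x})
    (m : ℤ) (hm : 2 * c - 1 ≤ m) (r t : ℕ) (hr : 1 ≤ r) (hrt : r ≤ t) :
    (divs S (m + ρ r) ∩ Set.Ico 0 m).ncard ≤
      (divs S (m + ρ t) ∩ Set.Ico 0 m).ncard :=
  stmt_15_general S c hc ρ hρ1 hmono m hm r t hr hrt
end

section
/- Let S be a numerical semigroup minimally generated by n₁ < ⋯ < n_e with conductor c, m ≥ 2c − 1, and M = {m = m₁ < ⋯ < m_r} ⊆ S a set that is m-closed under division (for each i, D(mᵢ) ∩ [m,∞) ⊆ M). Let L = M ∩ [m, m + n_e). Then #D(M) = #(D(L) ∩ [0,m)) + #M, where D(M) = ⋃_{x∈M} D(x). -/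
/-!
A divisor of some `x ∈ M` is either at least `m`, and then lies in `M` by closedness under
division, or a divisor `s < m`. In the latter case, if `x ≥ m + n_e`, write `x - s = g + t` with
`g` a generator: then `x - g` divides `x`, is at least `m` (so lies in `M`), and is divisible by
`s`. Descending in this way reaches an element of `L`, so `D(M)` is the disjoint union of
`D(L) ∩ [0, m)` and `M`.
-/

lemma AddSubmonoid.exists_ne_zero_sub_mem_closure {G : Type*} [AddCommGroup G] {s : Set G}
    {t : G} (ht : t ∈ closure s) (ht0 : t ≠ 0) : ∃ g ∈ s, g ≠ 0 ∧ t - g ∈ closure s := by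
  induction ht using closure_induction with
  | mem x hx => exact ⟨x, hx, ht0, by simp⟩
  | zero => exact absurd rfl ht0
  | add x y hx hy ihx ihy =>
    by_cases hx0 : x = 0
    · subst hx0
      simpa using ihy (by simpa using ht0)
    · obtain ⟨g, hg, hg0, hxg⟩ := ihx hx0
      exact ⟨g, hg, hg0, by simpa [sub_add_eq_add_sub] using add_mem hxg hy⟩

lemma mem_divs_self {S : Set ℤ} (h0 : 0 ∈ S) {x : ℤ} (hx : x ∈ S) : x ∈ divs S x :=
  ⟨hx, by simpa using h0⟩

section Descent

variable {S : Set ℤ} {A : Finset ℤ}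

lemma exists_generator_mem_divs_sub (hS : IsNumSgp S)
    (hgen : S = {x : ℤ | x ∈ AddSubmonoid.closure (A : Set ℤ)}) {x s : ℤ}
    (hs : s ∈ divs S x) (hsx : s ≠ x) :
    ∃ g ∈ A, 0 < g ∧ x - g ∈ divs S x ∧ s ∈ divs S (x - g) := by
  obtain ⟨-, hSnn, hSadd, -⟩ := hS
  obtain ⟨hsS, hxsS⟩ := hs
  have hAS : (A : Set ℤ) ⊆ S := fun a ha => hgen ▸ AddSubmonoid.subset_closure ha
  obtain ⟨g, hgA, hg0, hrest⟩ := AddSubmonoid.exists_ne_zero_sub_mem_closure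
    (show x - s ∈ AddSubmonoid.closure (A : Set ℤ) by rwa [hgen] at hxsS) (sub_ne_zero.2 hsx.symm)
  have hrestS : x - g - s ∈ S := by
    rw [sub_right_comm, hgen]
    exact hrest
  have hxgS : x - g ∈ S := by simpa using hSadd s hsS _ hrestS
  refine ⟨g, hgA, lt_of_le_of_ne (hSnn g (hAS hgA)) hg0.symm, ⟨hxgS, ?_⟩, hsS, hrestS⟩
  simpa using hAS hgA

variable {M : Finset ℤ} {m ne : ℤ}

theorem exists_mem_Ico_of_mem_divs (hS : IsNumSgp S)
    (hgen : S = {x : ℤ | x ∈ AddSubmonoid.closure (A : Set ℤ)}) (hle : ∀ g ∈ A, g ≤ ne)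
    (hclosed : ∀ x ∈ M, divs S x ∩ Set.Ici m ⊆ (M : Set ℤ)) {x s : ℤ} (hxM : x ∈ M)
    (hmx : m ≤ x) (hs : s ∈ divs S x) (hsm : s < m) :
    ∃ l ∈ (M : Set ℤ) ∩ Set.Ico m (m + ne), s ∈ divs S l := by
  by_cases hx : x < m + ne
  · exact ⟨x, ⟨hxM, hmx, hx⟩, hs⟩
  obtain ⟨g, hgA, hg0, hxg, hsg⟩ := exists_generator_mem_divs_sub hS hgen hs (by omega)
  have hmxg : m ≤ x - g := by linarith [hle g hgA]
  exact exists_mem_Ico_of_mem_divs hS hgen hle hclosed (hclosed x hxM ⟨hxg, hmxg⟩) hmxg hsg hsm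
termination_by (x - m).toNat
decreasing_by omega

theorem biUnion_divs_eq (hS : IsNumSgp S)
    (hgen : S = {x : ℤ | x ∈ AddSubmonoid.closure (A : Set ℤ)}) (hle : ∀ g ∈ A, g ≤ ne)
    (hMS : (M : Set ℤ) ⊆ S) (hMge : ∀ x ∈ M, m ≤ x)
    (hclosed : ∀ x ∈ M, divs S x ∩ Set.Ici m ⊆ (M : Set ℤ)) :
    ⋃ x ∈ (M : Set ℤ), divs S x =
      ((⋃ x ∈ (M : Set ℤ) ∩ Set.Ico m (m + ne), divs S x) ∩ Set.Ico 0 m) ∪ M := by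
  apply Set.Subset.antisymm
  · simp only [Set.iUnion_subset_iff]
    intro x hxM s hs
    rcases lt_or_ge s m with hsm | hms
    · obtain ⟨l, hl, hsl⟩ := exists_mem_Ico_of_mem_divs hS hgen hle hclosed hxM (hMge x hxM) hs hsm
      exact Or.inl ⟨Set.mem_biUnion hl hsl, hS.2.1 s hs.1, hsm⟩
    · exact Or.inr (hclosed x hxM ⟨hs, hms⟩)
  · rintro s (⟨hs, -⟩ | hsM)
    · exact Set.biUnion_mono Set.inter_subset_left (fun _ _ => subset_rfl) hs
    · exact Set.mem_biUnion hsM (mem_divs_self hS.1 (hMS hsM))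

end Descent

theorem stmt_17_general (S : Set ℤ) (hS : IsNumSgp S)
    (A : Finset ℤ) (hAne : A.Nonempty)
    (hgen : S = {x : ℤ | x ∈ AddSubmonoid.closure (A : Set ℤ)})
    (ne : ℤ) (hne : ne = A.max' hAne)
    (m : ℤ)
    (M : Finset ℤ) (hMS : (M : Set ℤ) ⊆ S)
    (hMge : ∀ x ∈ M, m ≤ x)
    (hclosed : ∀ x ∈ M, divs S x ∩ Set.Ici m ⊆ (M : Set ℤ))
    (L : Set ℤ) (hL : L = (M : Set ℤ) ∩ Set.Ico m (m + ne)) :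
    (⋃ x ∈ (M : Set ℤ), divs S x).ncard =
      ((⋃ x ∈ L, divs S x) ∩ Set.Ico 0 m).ncard + M.card := by
  have hle : ∀ g ∈ A, g ≤ ne := fun g hg => hne ▸ A.le_max' g hg
  have hdisj : Disjoint ((⋃ x ∈ L, divs S x) ∩ Set.Ico 0 m) (M : Set ℤ) :=
    Set.disjoint_left.2 fun s hs hsM => (hMge s hsM).not_gt hs.2.2
  rw [biUnion_divs_eq hS hgen hle hMS hMge hclosed, ← hL,
    Set.ncard_union_eq hdisj ((Set.finite_Ico 0 m).subset Set.inter_subset_right) M.finite_toSet,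
    Set.ncard_coe_finset]

theorem stmt_17 (S : Set ℤ) (hS : IsNumSgp S) (c : ℤ) (hc : IsConductor S c)
    (A : Finset ℤ) (hAne : A.Nonempty)
    (hgen : S = {x : ℤ | x ∈ AddSubmonoid.closure (A : Set ℤ)})
    (hmin : ∀ B : Finset ℤ, B ⊂ A → S ≠ {x : ℤ | x ∈ AddSubmonoid.closure (B : Set ℤ)})
    (ne : ℤ) (hne : ne = A.max' hAne)
    (m : ℤ) (hm : 2 * c - 1 ≤ m)
    (M : Finset ℤ) (hMS : (M : Set ℤ) ⊆ S) (hmM : m ∈ M)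
    (hMge : ∀ x ∈ M, m ≤ x)
    (hclosed : ∀ x ∈ M, divs S x ∩ Set.Ici m ⊆ (M : Set ℤ))
    (L : Set ℤ) (hL : L = (M : Set ℤ) ∩ Set.Ico m (m + ne)) :
    (⋃ x ∈ (M : Set ℤ), divs S x).ncard =
      ((⋃ x ∈ L, divs S x) ∩ Set.Ico 0 m).ncard + M.card :=
  stmt_17_general S hS A hAne hgen ne hne m M hMS hMge hclosed L hL
end
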